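/- arXiv:1602.01306 — 6 statements merged into one kernel-verified Lean document; each statement's English description precedes it below -/
import Mathlib

section
/- Let M be a matroid on a finite ground set E and let A ⊆ E. Then a set F ⊆ E is a minimum-cardinality member of the family {A △ B : B a base of M} if and only if F − A is a base of the contraction M/A and A − F is a base of the restriction of M to A. (Equivalently, with D = M*A, the lower matroid satisfies D_min = (M/A) ⊕ (M restricted to A)^*.) -/
open scoped symmDiff Matroid

namespace PaperMatroid

variable {α : Type}

/-- The contraction `M/C`, defined via duality: `M/C = (M✶ ∖ C)✶`. -/
def contr (M : Matroid α) (C : Set α) : Matroid α := (M✶ ↾ (M.E \ C))✶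

/-- The rank of a set `X`: the size of a largest independent subset of `X`. -/
noncomputable def rkFn (M : Matroid α) (X : Set α) : ℕ :=
  sSup {n : ℕ | ∃ I, M.Indep I ∧ I ⊆ X ∧ n = I.ncard}

/-- `F` is a minimum-cardinality member of the twist family `{A ∆ B : B a base of M}`. -/
def MinTwistMem (M : Matroid α) (A F : Set α) : Prop :=
  (∃ B, M.IsBase B ∧ F = A ∆ B) ∧
    ∀ F', (∃ B, M.IsBase B ∧ F' = A ∆ B) → F.ncard ≤ F'.ncard

/-- `F` is a maximum-cardinality member of the twist family `{A ∆ B : B a base of M}`. -/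
def MaxTwistMem (M : Matroid α) (A F : Set α) : Prop :=
  (∃ B, M.IsBase B ∧ F = A ∆ B) ∧
    ∀ F', (∃ B, M.IsBase B ∧ F' = A ∆ B) → F'.ncard ≤ F.ncard

/-- A circuit of `M`: a minimal dependent set. -/
def IsCircuit (M : Matroid α) (C : Set α) : Prop :=
  C ⊆ M.E ∧ ¬ M.Indep C ∧ ∀ X, X ⊂ C → M.Indep X

/-- The circuit space of `M`: all disjoint unions of circuits (including `∅`). -/
def CircuitSpace (M : Matroid α) : Set (Set α) :=
  {X | ∃ 𝒞 : Finset (Set α), (∀ C ∈ 𝒞, IsCircuit M C) ∧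
        (↑𝒞 : Set (Set α)).Pairwise Disjoint ∧ X = ⋃₀ ↑𝒞}

/-- The bicycle space of `M`: the intersection of the circuit space and the
cocircuit space (the circuit space of the dual). -/
def BicycleSpace (M : Matroid α) : Set (Set α) := CircuitSpace M ∩ CircuitSpace M✶

/-- A matroid is bipartite if every circuit has even cardinality. -/
def Bipartite (M : Matroid α) : Prop := ∀ C, IsCircuit M C → Even C.ncard

/-- A matroid is Eulerian if its ground set is a disjoint union of circuits. -/
def Eulerian (M : Matroid α) : Prop :=
  ∃ 𝒞 : Finset (Set α), (∀ C ∈ 𝒞, IsCircuit M C) ∧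
    (↑𝒞 : Set (Set α)).Pairwise Disjoint ∧ ⋃₀ ↑𝒞 = M.E

/-- Representability of a matroid over a field `K`: there is a map of the ground set
into a `K`-vector space under which a set is independent exactly when its image is
linearly independent. -/
def IsRepresentableOver (M : Matroid α) (K : Type) [Field K] : Prop :=
  ∃ (V : Type) (_ : AddCommGroup V) (_ : Module K V) (φ : α → V),
    ∀ I, I ⊆ M.E → (M.Indep I ↔ LinearIndependent K (I.restrict φ))

/-- A binary matroid: one representable over `GF(2)`. -/
def Binary (M : Matroid α) : Prop := IsRepresentableOver M (ZMod 2)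

/-!
All bases have the same size, so `|A ∆ B| = |A| + r(M) - 2 |A ∩ B|` is minimal exactly when
`|A ∩ B|` is maximal, i.e. when `A ∩ B` is a basis of `A`. For such a base `B`, the bases of
`M ／ A` are the sets `B' \ A` with `B'` a base of `M` containing the basis `A ∩ B` of `A`.
Writing `F = A ∆ B`, we have `F \ A = B \ A` and `A \ F = A ∩ B`.
-/

end PaperMatroid

open Set

lemma Set.ncard_symmDiff_add_two_mul_ncard_inter {α : Type} {A B : Set α} (hA : A.Finite)
    (hB : B.Finite) : (A ∆ B).ncard + 2 * (A ∩ B).ncard = A.ncard + B.ncard := by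
  have hsub : A ∩ B ⊆ A ∪ B := inter_subset_left.trans subset_union_left
  have hdiff : ((A ∪ B) \ (A ∩ B)).ncard = (A ∪ B).ncard - (A ∩ B).ncard :=
    ncard_sdiff hsub (hA.inter_of_left B)
  have hle : (A ∩ B).ncard ≤ (A ∪ B).ncard := ncard_le_ncard hsub (hA.union hB)
  have hunion := ncard_union_add_ncard_inter A B hA hB
  rw [show A ∆ B = (A ∪ B) \ (A ∩ B) from symmDiff_eq_sup_sdiff_inf A B]
  omega

namespace Matroid

variable {α : Type} {M : Matroid α} {A B I J X : Set α}

lemma IsBasis.contract_isBase_iff (hI : M.IsBasis I X) :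
    (M ／ X).IsBase J ↔ M.IsBase (J ∪ I) ∧ Disjoint J X := by
  have hloops : X \ I ⊆ (M ／ I).loops := hI.sdiff_subset_loops_contract
  have hcoindep : (M ／ I).Coindep (X \ I) := by
    obtain ⟨B, hB⟩ := (M ／ I).exists_isBase
    exact coindep_iff_exists'.2 ⟨⟨B, hB, subset_sdiff.2
      ⟨hB.subset_ground, hB.indep.disjoint_loops.mono_right hloops⟩⟩,
      hloops.trans (loops_subset_ground _)⟩
  rw [hI.contract_eq_contract_delete, hcoindep.delete_isBase_iff, hI.indep.contract_isBase_iff,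
    and_assoc, ← disjoint_union_right, union_sdiff_cancel hI.subset]

lemma contract_isBase_sdiff_and_restrict_isBase_inter_iff (hA : A ⊆ M.E) :
    (M ／ A).IsBase (B \ A) ∧ (M ↾ A).IsBase (A ∩ B) ↔ M.IsBase B ∧ M.IsBasis (A ∩ B) A := by
  rw [isBase_restrict_iff hA]
  refine ⟨fun ⟨hB, hAB⟩ ↦ ⟨?_, hAB⟩, fun ⟨hB, hAB⟩ ↦ ⟨?_, hAB⟩⟩
  · simpa only [inter_comm A B, sdiff_union_inter] using (hAB.contract_isBase_iff.1 hB).1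
  · rw [hAB.contract_isBase_iff, inter_comm A B, sdiff_union_inter]
    exact ⟨hB, disjoint_sdiff_left⟩

lemma IsBase.inter_isBasis_iff_forall_ncard_inter_le (hB : M.IsBase B) (hAfin : A.Finite)
    (hA : A ⊆ M.E) :
    M.IsBasis (A ∩ B) A ↔ ∀ B', M.IsBase B' → (A ∩ B').ncard ≤ (A ∩ B).ncard := by
  have hcast (B' : Set α) : ((A ∩ B').ncard : ℕ∞) = (A ∩ B').encard :=
    (hAfin.inter_of_left B').cast_ncard_eq
  simp_rw [← Nat.cast_le (α := ℕ∞), hcast]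
  refine ⟨fun hAB B' hB' ↦ ?_, fun hmax ↦ ?_⟩
  · rw [hAB.encard_eq_eRk]
    exact (hB'.indep.inter_left A).encard_le_eRk_of_subset inter_subset_left
  · obtain ⟨I, hI⟩ := M.exists_isBasis A hA
    obtain ⟨B₀, hB₀, rfl⟩ := hI.exists_isBase
    refine (hB.indep.inter_left A).isBasis_of_eRk_ge (hAfin.inter_of_left B) inter_subset_left
      ?_ hA
    rw [hI.eRk_eq_encard, (hB.indep.inter_left A).eRk_eq_encard, inter_comm]
    exact hmax B₀ hB₀

end Matroid

namespace PaperMatroid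

variable {α : Type}

lemma minTwistMem_symmDiff_iff {M : Matroid α} [M.Finite] {A B : Set α} (hA : A ⊆ M.E) :
    MinTwistMem M A (A ∆ B) ↔ M.IsBase B ∧ M.IsBasis (A ∩ B) A := by
  have hAfin : A.Finite := M.set_finite A hA
  have hcard {B₁ B₂} (hB₁ : M.IsBase B₁) (hB₂ : M.IsBase B₂) :
      (A ∆ B₁).ncard ≤ (A ∆ B₂).ncard ↔ (A ∩ B₂).ncard ≤ (A ∩ B₁).ncard := by
    have h₁ := ncard_symmDiff_add_two_mul_ncard_inter hAfin (M.set_finite B₁ hB₁.subset_ground)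
    have h₂ := ncard_symmDiff_add_two_mul_ncard_inter hAfin (M.set_finite B₂ hB₂.subset_ground)
    have := hB₁.ncard_eq_ncard_of_isBase hB₂
    omega
  constructor
  · rintro ⟨⟨B', hB', hBB'⟩, hmin⟩
    obtain rfl := symmDiff_right_injective A hBB'
    exact ⟨hB', (hB'.inter_isBasis_iff_forall_ncard_inter_le hAfin hA).2
      fun B'' hB'' ↦ (hcard hB' hB'').1 (hmin _ ⟨B'', hB'', rfl⟩)⟩
  · rintro ⟨hB, hAB⟩
    refine ⟨⟨B, hB, rfl⟩, ?_⟩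
    rintro _ ⟨B', hB', rfl⟩
    exact (hcard hB hB').2 ((hB.inter_isBasis_iff_forall_ncard_inter_le hAfin hA).1 hAB B' hB')

theorem minTwistMem_iff_general (M : Matroid α) [M.Finite] (A : Set α) (hA : A ⊆ M.E)
    (F : Set α) :
    MinTwistMem M A F ↔ (contr M A).IsBase (F \ A) ∧ (M ↾ A).IsBase (A \ F) := by
  obtain ⟨B, rfl⟩ : ∃ B, F = A ∆ B := ⟨A ∆ F, (symmDiff_symmDiff_cancel_left A F).symm⟩
  rw [show contr M A = M ／ A from rfl, minTwistMem_symmDiff_iff hA, symmDiff_sdiff_left,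
    sdiff_symmDiff_left]
  exact (M.contract_isBase_sdiff_and_restrict_isBase_inter_iff hA).symm

/-- `F` is a minimum-cardinality member of `{A ∆ B : B a base of M}` iff `F − A` is a
base of `M/A` and `A − F` is a base of the restriction of `M` to `A`. -/
theorem minTwistMem_iff (M : Matroid α) [M.Finite] (A : Set α) (hA : A ⊆ M.E)
    (F : Set α) (hF : F ⊆ M.E) :
    MinTwistMem M A F ↔ (contr M A).IsBase (F \ A) ∧ (M ↾ A).IsBase (A \ F) :=
  minTwistMem_iff_general M A hA F

end PaperMatroid
end

section
/- Let D = (E,𝓕) be a delta-matroid, let A ⊆ E, and let s₀ = min{|B ∩ A| : B ∈ 𝓕_min(D)}. Then every feasible set F ∈ 𝓕 satisfies |F ∩ A| ≥ s₀. -/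
/-!
Every feasible set `F` of a delta-matroid contains a minimum-cardinality feasible set, which
then meets `A` in at most `|F ∩ A|` elements. To find it, take `B ∈ 𝓕_min` with `|B \ F|` minimal
and exchange some `u ∈ B \ F` against `F`: the partner `v` cannot lie in `B`, since
`B △ {u, v}` would be a smaller feasible set, so `B - u + v` is again in `𝓕_min` and closer to `F`.
-/

open scoped symmDiff

structure SetSystem (α : Type) [DecidableEq α] where
  E : Finset α
  F : Finset (Finset α)

namespace SetSystem

variable {α : Type} [DecidableEq α]

/-- A delta-matroid: nonempty collection of feasible subsets of the ground set
satisfying the symmetric exchange axiom. -/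
def IsDeltaMatroid (D : SetSystem α) : Prop :=
  D.F.Nonempty ∧ (∀ F ∈ D.F, F ⊆ D.E) ∧
    ∀ X ∈ D.F, ∀ Y ∈ D.F, ∀ u ∈ X ∆ Y, ∃ v ∈ X ∆ Y, X ∆ ({u, v} : Finset α) ∈ D.F

/-- A matroid, viewed as a delta-matroid whose feasible sets are equicardinal. -/
def IsMatroid (D : SetSystem α) : Prop :=
  D.IsDeltaMatroid ∧ ∀ F₁ ∈ D.F, ∀ F₂ ∈ D.F, F₁.card = F₂.card

/-- The twist `D*A`. -/
def twist (D : SetSystem α) (A : Finset α) : SetSystem α :=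
  ⟨D.E, D.F.image fun F => A ∆ F⟩

/-- The dual `D* := D * E`. -/
def dual (D : SetSystem α) : SetSystem α := D.twist D.E

def IsLoop (D : SetSystem α) (e : α) : Prop := ∀ F ∈ D.F, e ∉ F

def IsColoop (D : SetSystem α) (e : α) : Prop := ∀ F ∈ D.F, e ∈ F

open Classical in
/-- Deletion of a single element (when `e` is a coloop, `D∖e := D/e`). -/
noncomputable def del (D : SetSystem α) (e : α) : SetSystem α :=
  if D.IsColoop e then ⟨D.E.erase e, D.F.image fun F => F.erase e⟩
  else ⟨D.E.erase e, D.F.filter fun F => e ∉ F⟩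

open Classical in
/-- Contraction of a single element (when `e` is a loop, `D/e := D∖e`). -/
noncomputable def con (D : SetSystem α) (e : α) : SetSystem α :=
  if D.IsLoop e then ⟨D.E.erase e, D.F.filter fun F => e ∉ F⟩
  else ⟨D.E.erase e, (D.F.filter fun F => e ∈ F).image fun F => F.erase e⟩

/-- Loop complementation on a single element. -/
def lc (D : SetSystem α) (e : α) : SetSystem α :=
  ⟨D.E, D.F ∆ ((D.F.filter fun F => e ∉ F).image fun F => insert e F)⟩

/-- Loop complementation on a set of elements (applied in some order;
the operation is order-independent). -/
noncomputable def lcSet (D : SetSystem α) (A : Finset α) : SetSystem α :=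
  A.toList.foldl lc D

/-- The dual pivot `D *̄ A := ((D*A)+A)*A`. -/
noncomputable def dpivot (D : SetSystem α) (A : Finset α) : SetSystem α :=
  ((D.twist A).lcSet A).twist A

/-- Set systems reachable from `D` by sequences of twists and loop complementations. -/
inductive Reachable : SetSystem α → SetSystem α → Prop
  | refl (D : SetSystem α) : Reachable D D
  | twist (D D' : SetSystem α) (A : Finset α) (hA : A ⊆ D'.E) :
      Reachable D D' → Reachable D (D'.twist A)
  | lc (D D' : SetSystem α) (A : Finset α) (hA : A ⊆ D'.E) :
      Reachable D D' → Reachable D (D'.lcSet A)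

/-- A vf-safe delta-matroid: any sequence of twists and loop complementations
yields a delta-matroid. -/
def VfSafe (D : SetSystem α) : Prop := ∀ D', Reachable D D' → D'.IsDeltaMatroid

/-- The minimum-cardinality feasible sets. -/
def Fmin (D : SetSystem α) : Finset (Finset α) :=
  D.F.filter fun F => ∀ F' ∈ D.F, F.card ≤ F'.card

/-- The maximum-cardinality feasible sets. -/
def Fmax (D : SetSystem α) : Finset (Finset α) :=
  D.F.filter fun F => ∀ F' ∈ D.F, F'.card ≤ F.card

/-- The lower matroid `D_min`. -/
def Dmin (D : SetSystem α) : SetSystem α := ⟨D.E, D.Fmin⟩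

def IsRibbonLoop (D : SetSystem α) (e : α) : Prop := ∀ F ∈ D.Fmin, e ∉ F

def IsNonorientableRL (D : SetSystem α) (e : α) : Prop :=
  D.IsRibbonLoop e ∧ (D.twist {e}).IsRibbonLoop e

def IsOrientableRL (D : SetSystem α) (e : α) : Prop :=
  D.IsRibbonLoop e ∧ (D.dpivot {e}).IsRibbonLoop e

def IsTrivialOrientableRL (D : SetSystem α) (e : α) : Prop :=
  D.IsOrientableRL e ∧ D.IsLoop e

def IsTrivialNonorientableRL (D : SetSystem α) (e : α) : Prop :=
  D.IsNonorientableRL e ∧ (D.lc e).IsLoop e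

end SetSystem

namespace Finset

variable {β : Type*} [DecidableEq β] {s : Finset β} {u v : β}

lemma symmDiff_pair_subset_erase (hu : u ∈ s) (hv : v ∈ s) : s ∆ {u, v} ⊆ s.erase u := by
  rw [symmDiff_of_ge (insert_subset hu (singleton_subset_iff.2 hv)), sdiff_insert]
  exact erase_subset_erase u sdiff_subset

lemma symmDiff_pair_eq_insert_erase (hu : u ∈ s) (hv : v ∉ s) :
    s ∆ {u, v} = insert v (s.erase u) := by
  ext x
  by_cases hxu : x = u
  · subst hxu
    simp [mem_symmDiff, hu, ne_of_mem_of_not_mem hu hv]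
  · by_cases hxv : x = v
    · subst hxv
      simp [mem_symmDiff, hv]
    · simp [mem_symmDiff, hxu, hxv]

end Finset

open Finset

namespace SetSystem

variable {α : Type} [DecidableEq α] {D : SetSystem α}

lemma mem_Fmin {B : Finset α} : B ∈ D.Fmin ↔ B ∈ D.F ∧ ∀ F ∈ D.F, #B ≤ #F :=
  mem_filter

lemma Fmin_nonempty (hD : D.IsDeltaMatroid) : D.Fmin.Nonempty := by
  obtain ⟨B, hB, hBmin⟩ := exists_min_image D.F card hD.1
  exact ⟨B, mem_Fmin.2 ⟨hB, hBmin⟩⟩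

lemma exists_insert_erase_mem_Fmin (hD : D.IsDeltaMatroid) {B F : Finset α} (hB : B ∈ D.Fmin)
    (hF : F ∈ D.F) {u : α} (huB : u ∈ B) (huF : u ∉ F) :
    ∃ v ∈ F, v ∉ B ∧ insert v (B.erase u) ∈ D.Fmin := by
  obtain ⟨hBF, hBmin⟩ := mem_Fmin.1 hB
  obtain ⟨v, hv, hexch⟩ := hD.2.2 B hBF F hF u (mem_symmDiff.2 (Or.inl ⟨huB, huF⟩))
  rcases mem_symmDiff.1 hv with ⟨hvB, -⟩ | ⟨hvF, hvB⟩
  · have hsmaller : #(B ∆ {u, v}) < #B :=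
      (card_le_card (symmDiff_pair_subset_erase huB hvB)).trans_lt (card_erase_lt_of_mem huB)
    exact absurd (hBmin _ hexch) hsmaller.not_ge
  · rw [symmDiff_pair_eq_insert_erase huB hvB] at hexch
    have hcard : #(insert v (B.erase u)) = #B := by
      rw [card_insert_of_notMem fun h => hvB (mem_of_mem_erase h), card_erase_add_one huB]
    exact ⟨v, hvF, hvB, mem_Fmin.2 ⟨hexch, hcard ▸ hBmin⟩⟩

lemma exists_mem_Fmin_subset (hD : D.IsDeltaMatroid) {F : Finset α} (hF : F ∈ D.F) :
    ∃ B ∈ D.Fmin, B ⊆ F := by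
  obtain ⟨B, hB, hBclosest⟩ := exists_min_image D.Fmin (fun B => #(B \ F)) (Fmin_nonempty hD)
  refine ⟨B, hB, fun u huB => ?_⟩
  by_contra huF
  obtain ⟨v, hvF, -, hB'⟩ := exists_insert_erase_mem_Fmin hD hB hF huB huF
  have hcloser : #(insert v (B.erase u) \ F) < #(B \ F) := by
    rw [insert_sdiff_of_mem _ hvF, erase_sdiff_comm]
    exact card_erase_lt_of_mem (mem_sdiff.2 ⟨huB, huF⟩)
  exact (hBclosest _ hB').not_gt hcloser

theorem card_inter_ge_min_general (D : SetSystem α) (hD : D.IsDeltaMatroid)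
    (A : Finset α) (s₀ : ℕ)
    (hs : IsLeast {n : ℕ | ∃ B ∈ D.Fmin, n = (B ∩ A).card} s₀) :
    ∀ F ∈ D.F, s₀ ≤ (F ∩ A).card := by
  intro F hF
  obtain ⟨B, hB, hBF⟩ := exists_mem_Fmin_subset hD hF
  exact (hs.2 ⟨B, hB, rfl⟩).trans (card_le_card (inter_subset_inter_right hBF))

/-- Every feasible set of a delta-matroid meets `A` in at least
`s₀ = min {|B ∩ A| : B ∈ 𝓕_min(D)}` elements. -/
theorem card_inter_ge_min (D : SetSystem α) (hD : D.IsDeltaMatroid)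
    (A : Finset α) (hA : A ⊆ D.E) (s₀ : ℕ)
    (hs : IsLeast {n : ℕ | ∃ B ∈ D.Fmin, n = (B ∩ A).card} s₀) :
    ∀ F ∈ D.F, s₀ ≤ (F ∩ A).card :=
  card_inter_ge_min_general D hD A s₀ hs

end SetSystem
end

section
/- Let D = (E,𝓕) be a delta-matroid and let A be a nonempty proper subset of E. Then all members of {A △ F : F ∈ 𝓕} have the same cardinality (i.e. the twist D*A is a matroid) if and only if both of the following hold: (1) A is separating in D_min, i.e. for all F₁, F₂ ∈ 𝓕_min(D), the set (F₁ ∩ A) ∪ (F₂ − A) belongs to 𝓕_min(D); and (2) the families {F − A : F ∈ 𝓕, |F ∩ A| ≤ |F' ∩ A| for all F' ∈ 𝓕} and {F − (E−A) : F ∈ 𝓕, |F ∩ (E−A)| ≤ |F' ∩ (E−A)| for all F' ∈ 𝓕} each consist of equicardinal sets (i.e. D∖A and D∖(E−A) are matroids). -/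
open scoped symmDiff

namespace SetSystem

variable {α : Type} [DecidableEq α]

/-- The feasible sets of the deletion `D ∖ A`:
`{F − A : F ∈ 𝓕, |F ∩ A| ≤ |F' ∩ A| for all F' ∈ 𝓕}`. -/
def delFam (D : SetSystem α) (A : Finset α) : Finset (Finset α) :=
  (D.F.filter fun F => ∀ F' ∈ D.F, (F ∩ A).card ≤ (F' ∩ A).card).image fun F => F \ A

/-!
Write `a(F) = |F ∩ A|`. Since `|A ∆ F| = |A| + |F| - 2 a(F)`, if the twist is equicardinal then
the minimum-size feasible sets are exactly the `a`-minimal ones, and a closest-point exchange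
argument shows that `a`-minimal feasible sets may swap their parts inside `A`; equicardinality of
`D∖A` and `D∖(E−A)` is immediate.

Conversely, the exchange axiom shows that `|A ∆ F|` attains its maximum at an `a`-minimal feasible
set and (replacing `A` by `E − A`) its minimum at a feasible set minimising `|F − A|`.
Equicardinality of `D∖A` and `D∖(E−A)` makes `|A ∆ F|` constant on each of these two classes,
and separation of `D_min` yields one feasible set lying in both, so maximum and minimum coincide.
-/

open Finset

section SymmDiffCard

variable {s t : Finset α} {u v : α}

lemma card_symmDiff_add_card_inter (s t : Finset α) :
    #(s ∆ t) + #(t ∩ s) = #s + #(t \ s) := by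
  rw [Finset.symmDiff_def, card_union_of_disjoint disjoint_sdiff_sdiff, inter_comm]
  have := card_sdiff_add_card_inter s t
  omega

lemma card_symmDiff_lt_card (hts : t ⊆ s) (ht : t.Nonempty) : #(s ∆ t) < #s := by
  rw [symmDiff_of_ge hts]
  exact card_lt_card (sdiff_ssubset hts ht)

lemma card_le_card_symmDiff_pair (hu : u ∉ s) : #s ≤ #(s ∆ {u, v}) :=
  calc #s ≤ #(s.erase v) + 1 := by have := pred_card_le_card_erase (s := s) (a := v); omega
    _ = #(insert u (s.erase v)) := (card_insert_of_notMem fun h => hu (mem_of_mem_erase h)).symm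
    _ ≤ #(s ∆ {u, v}) := card_le_card fun x hx => by
      simp only [mem_insert, mem_erase, mem_symmDiff, mem_singleton] at hx ⊢
      grind

lemma card_symmDiff_pair_le_card (hu : u ∈ s) : #(s ∆ {u, v}) ≤ #s := by
  have hu' : u ∉ s ∆ {u, v} := by simp [mem_symmDiff, hu]
  simpa only [symmDiff_symmDiff_cancel_right] using card_le_card_symmDiff_pair (v := v) hu'

lemma card_sdiff_symmDiff_add_card_symmDiff {E A F : Finset α} (hF : F ⊆ E) :
    #((E \ A) ∆ F) + #(A ∆ F) = #(E ∪ A) := by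
  have hsub : A ∆ F ⊆ E ∪ A := fun x hx => by
    simp only [mem_symmDiff, mem_union] at hx ⊢
    grind
  have hcompl : (E \ A) ∆ F = (E ∪ A) \ (A ∆ F) := by
    ext x
    simp only [mem_symmDiff, mem_union, mem_sdiff]
    have := @hF x
    tauto
  rw [hcompl, card_sdiff_add_card_eq_card hsub]

end SymmDiffCard

def FminInter (D : SetSystem α) (B : Finset α) : Finset (Finset α) :=
  D.F.filter fun F => ∀ F' ∈ D.F, #(F ∩ B) ≤ #(F' ∩ B)

lemma delFam_eq_image (D : SetSystem α) (B : Finset α) :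
    D.delFam B = (D.FminInter B).image (· \ B) := rfl

lemma card_inter_eq_of_mem_FminInter {D : SetSystem α} {B X Y : Finset α}
    (hX : X ∈ D.FminInter B) (hY : Y ∈ D.FminInter B) : #(X ∩ B) = #(Y ∩ B) :=
  le_antisymm ((mem_filter.1 hX).2 Y (mem_filter.1 hY).1)
    ((mem_filter.1 hY).2 X (mem_filter.1 hX).1)

lemma mem_FminInter_of_inter_eq {D : SetSystem α} {B X Z : Finset α} (hZ : Z ∈ D.F)
    (hX : X ∈ D.FminInter B) (hZX : Z ∩ B = X ∩ B) : Z ∈ D.FminInter B :=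
  mem_filter.2 ⟨hZ, hZX ▸ (mem_filter.1 hX).2⟩

lemma delFam_card_eq_of_card_symmDiff_eq (D : SetSystem α) {B : Finset α}
    (h : ∀ F₁ ∈ D.F, ∀ F₂ ∈ D.F, #(B ∆ F₁) = #(B ∆ F₂)) :
    ∀ G₁ ∈ D.delFam B, ∀ G₂ ∈ D.delFam B, #G₁ = #G₂ := by
  simp only [delFam_eq_image, forall_mem_image]
  intro F₁ h₁ F₂ h₂
  have := card_inter_eq_of_mem_FminInter h₁ h₂
  have := card_symmDiff_add_card_inter B F₁
  have := card_symmDiff_add_card_inter B F₂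
  have := h F₁ (mem_filter.1 h₁).1 F₂ (mem_filter.1 h₂).1
  omega

/-- Because `|F| = 2 |F ∩ B| + |B ∆ F| - |B|`. -/
lemma Fmin_eq_FminInter_of_card_symmDiff_eq (D : SetSystem α) {B : Finset α}
    (h : ∀ F₁ ∈ D.F, ∀ F₂ ∈ D.F, #(B ∆ F₁) = #(B ∆ F₂)) : D.Fmin = D.FminInter B := by
  refine filter_congr fun F hF => forall₂_congr fun F' hF' => ?_
  have := card_symmDiff_add_card_inter B F
  have := card_symmDiff_add_card_inter B F'
  have := card_inter_add_card_sdiff F B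
  have := card_inter_add_card_sdiff F' B
  have := h F hF F' hF'
  omega

namespace IsDeltaMatroid

variable {D : SetSystem α}

/-- Take `X` satisfying `P` as close to `Y` as possible: every exchange towards `Y` gets closer,
so it must leave `P`. -/
lemma exists_forall_exchange_not (hD : D.IsDeltaMatroid) (P : Finset α → Prop)
    {X₀ Y : Finset α} (hX₀ : X₀ ∈ D.F) (hP : P X₀) (hY : Y ∈ D.F) :
    ∃ X ∈ D.F, P X ∧ ∀ u ∈ X ∆ Y, ∃ v ∈ X ∆ Y, X ∆ {u, v} ∈ D.F ∧ ¬ P (X ∆ {u, v}) := by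
  classical
  obtain ⟨X, hX, hclosest⟩ :=
    exists_min_image (D.F.filter P) (fun X => #(X ∆ Y)) ⟨X₀, mem_filter.2 ⟨hX₀, hP⟩⟩
  obtain ⟨hXF, hPX⟩ := mem_filter.1 hX
  refine ⟨X, hXF, hPX, fun u hu => ?_⟩
  obtain ⟨v, hv, hXuv⟩ := hD.2.2 X hXF Y hY u hu
  refine ⟨v, hv, hXuv, fun hP' => ?_⟩
  have hcloser : #(X ∆ {u, v} ∆ Y) < #(X ∆ Y) := by
    rw [symmDiff_right_comm]
    exact card_symmDiff_lt_card (insert_subset hu (singleton_subset_iff.2 hv)) (insert_nonempty _ _)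
  exact (hclosest _ (mem_filter.2 ⟨hXuv, hP'⟩)).not_gt hcloser

lemma FminInter_nonempty (hD : D.IsDeltaMatroid) (B : Finset α) :
    (D.FminInter B).Nonempty := by
  obtain ⟨X, hX, hmin⟩ := exists_min_image D.F (fun F => #(F ∩ B)) hD.1
  exact ⟨X, mem_filter.2 ⟨hX, hmin⟩⟩

lemma exists_mem_Fmin_subset (hD : D.IsDeltaMatroid) {Y : Finset α} (hY : Y ∈ D.F) :
    ∃ X ∈ D.Fmin, X ⊆ Y := by
  obtain ⟨X₀, hX₀, hmin₀⟩ := exists_min_image D.F card hD.1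
  obtain ⟨X, -, hX, hexch⟩ :=
    hD.exists_forall_exchange_not (· ∈ D.Fmin) hX₀ (mem_filter.2 ⟨hX₀, hmin₀⟩) hY
  refine ⟨X, hX, fun u huX => by_contra fun huY => ?_⟩
  obtain ⟨v, -, hXuv, hnot⟩ := hexch u (mem_symmDiff.2 (Or.inl ⟨huX, huY⟩))
  exact hnot (mem_filter.2 ⟨hXuv, fun F hF =>
    (card_symmDiff_pair_le_card huX).trans ((mem_filter.1 hX).2 F hF)⟩)

lemma exists_mem_Fmin_mem_FminInter (hD : D.IsDeltaMatroid) (B : Finset α) :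
    ∃ X ∈ D.Fmin, X ∈ D.FminInter B := by
  obtain ⟨Y, hY⟩ := hD.FminInter_nonempty B
  obtain ⟨X, hX, hXY⟩ := hD.exists_mem_Fmin_subset (mem_filter.1 hY).1
  refine ⟨X, hX, mem_filter.2 ⟨(mem_filter.1 hX).1, fun F hF => ?_⟩⟩
  exact (card_le_card (inter_subset_inter_right hXY)).trans ((mem_filter.1 hY).2 F hF)

lemma inter_union_sdiff_mem_FminInter (hD : D.IsDeltaMatroid) {B X Y : Finset α}
    (hX : X ∈ D.FminInter B) (hY : Y ∈ D.FminInter B) : X ∩ B ∪ Y \ B ∈ D.FminInter B := by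
  obtain ⟨Z, -, ⟨hZ, hZY⟩, hexch⟩ := hD.exists_forall_exchange_not
    (fun Z => Z ∈ D.FminInter B ∧ Z \ B = Y \ B) (mem_filter.1 hY).1 ⟨hY, rfl⟩ (mem_filter.1 hX).1
  suffices hZX : Z ∩ B = X ∩ B by
    rwa [← hZX, ← hZY, ← inf_eq_inter, ← sup_eq_union, sup_inf_sdiff]
  by_contra hne
  obtain ⟨u, huZ, huX⟩ := not_subset.1 fun hsub =>
    hne (eq_of_subset_of_card_le hsub (card_inter_eq_of_mem_FminInter hX hZ).le)
  obtain ⟨v, -, hZuv, hnot⟩ := hexch u (mem_symmDiff.2 (Or.inl ⟨(mem_inter.1 huZ).1,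
    fun h => huX (mem_inter.2 ⟨h, (mem_inter.1 huZ).2⟩)⟩))
  have huB := (mem_inter.1 huZ).2
  have hinter : Z ∆ {u, v} ∩ B = (Z ∩ B) ∆ ({u, v} ∩ B) := inf_symmDiff_distrib_right _ _ _
  by_cases hvB : v ∈ B
  · rw [inter_eq_left.2 (insert_subset huB (singleton_subset_iff.2 hvB))] at hinter
    refine hnot ⟨mem_filter.2 ⟨hZuv, fun F hF => ?_⟩, ?_⟩
    · exact hinter ▸ (card_symmDiff_pair_le_card huZ).trans ((mem_filter.1 hZ).2 F hF)
    · rw [← hZY]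
      ext x
      simp only [mem_sdiff, mem_symmDiff, mem_insert, mem_singleton]
      grind
  · have hu : {u, v} ∩ B = {u} := by
      ext x
      simp only [mem_inter, mem_insert, mem_singleton]
      grind
    rw [hu] at hinter
    have hlt := card_symmDiff_lt_card (singleton_subset_iff.2 huZ) (singleton_nonempty u)
    exact (hinter ▸ hlt).not_ge ((mem_filter.1 hZ).2 _ hZuv)

lemma exists_mem_FminInter_forall_card_symmDiff_le (hD : D.IsDeltaMatroid) (B : Finset α) :
    ∃ X ∈ D.FminInter B, ∀ F ∈ D.F, #(B ∆ F) ≤ #(B ∆ X) := by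
  obtain ⟨Y, hY⟩ := hD.FminInter_nonempty B
  obtain ⟨X₀, hX₀, hmax₀⟩ := exists_max_image D.F (fun F => #(B ∆ F)) hD.1
  obtain ⟨X, hXF, hmax, hexch⟩ :=
    hD.exists_forall_exchange_not (fun X => ∀ F ∈ D.F, #(B ∆ F) ≤ #(B ∆ X)) hX₀ hmax₀
      (mem_filter.1 hY).1
  refine ⟨X, mem_filter.2 ⟨hXF, fun F hF => ?_⟩, hmax⟩
  refine le_trans ?_ ((mem_filter.1 hY).2 F hF)
  by_contra hlt
  obtain ⟨u, huX, huY⟩ := not_subset.1 fun hsub => hlt (card_le_card hsub)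
  obtain ⟨v, -, -, hnot⟩ := hexch u (mem_symmDiff.2 (Or.inl ⟨(mem_inter.1 huX).1,
    fun h => huY (mem_inter.2 ⟨h, (mem_inter.1 huX).2⟩)⟩))
  refine hnot fun F hF => (hmax F hF).trans ?_
  rw [← symmDiff_assoc]
  exact card_le_card_symmDiff_pair fun h => by simp_all [mem_symmDiff]

lemma card_symmDiff_le_of_delFam (hD : D.IsDeltaMatroid) {B Z F : Finset α}
    (hdel : ∀ G₁ ∈ D.delFam B, ∀ G₂ ∈ D.delFam B, #G₁ = #G₂) (hZ : Z ∈ D.FminInter B)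
    (hF : F ∈ D.F) : #(B ∆ F) ≤ #(B ∆ Z) := by
  obtain ⟨X, hX, hmax⟩ := hD.exists_mem_FminInter_forall_card_symmDiff_le B
  have := card_inter_eq_of_mem_FminInter hX hZ
  have := hdel _ (mem_image_of_mem (· \ B) hX) _ (mem_image_of_mem (· \ B) hZ)
  have := card_symmDiff_add_card_inter B X
  have := card_symmDiff_add_card_inter B Z
  have := hmax F hF
  omega

end IsDeltaMatroid

theorem twist_isMatroid_iff_general (D : SetSystem α) (hD : D.IsDeltaMatroid)
    (A : Finset α) :
    (∀ F₁ ∈ D.F, ∀ F₂ ∈ D.F, (A ∆ F₁).card = (A ∆ F₂).card) ↔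
      ((∀ F₁ ∈ D.Fmin, ∀ F₂ ∈ D.Fmin, (F₁ ∩ A) ∪ (F₂ \ A) ∈ D.Fmin) ∧
        (∀ G₁ ∈ D.delFam A, ∀ G₂ ∈ D.delFam A, G₁.card = G₂.card) ∧
        (∀ G₁ ∈ D.delFam (D.E \ A), ∀ G₂ ∈ D.delFam (D.E \ A), G₁.card = G₂.card)) := by
  have hcompl : ∀ F ∈ D.F, #((D.E \ A) ∆ F) + #(A ∆ F) = #(D.E ∪ A) :=
    fun F hF => card_sdiff_symmDiff_add_card_symmDiff (hD.2.1 F hF)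
  constructor
  · intro hcard
    have hcardCompl : ∀ F₁ ∈ D.F, ∀ F₂ ∈ D.F, #((D.E \ A) ∆ F₁) = #((D.E \ A) ∆ F₂) :=
      fun F₁ h₁ F₂ h₂ => by linarith [hcompl F₁ h₁, hcompl F₂ h₂, hcard F₁ h₁ F₂ h₂]
    refine ⟨?_, D.delFam_card_eq_of_card_symmDiff_eq hcard,
      D.delFam_card_eq_of_card_symmDiff_eq hcardCompl⟩
    rw [D.Fmin_eq_FminInter_of_card_symmDiff_eq hcard]
    exact fun F₁ h₁ F₂ h₂ => hD.inter_union_sdiff_mem_FminInter h₁ h₂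
  · rintro ⟨hsep, hdel, hdelCompl⟩
    obtain ⟨X, hX, hXA⟩ := hD.exists_mem_Fmin_mem_FminInter A
    obtain ⟨Y, hY, hYA⟩ := hD.exists_mem_Fmin_mem_FminInter (D.E \ A)
    have hZ : X ∩ A ∪ Y \ A ∈ D.F := (mem_filter.1 (hsep X hX Y hY)).1
    have hZA : X ∩ A ∪ Y \ A ∈ D.FminInter A :=
      mem_FminInter_of_inter_eq hZ hXA (by ext; simp only [mem_inter, mem_union, mem_sdiff]; tauto)
    have hZCompl : X ∩ A ∪ Y \ A ∈ D.FminInter (D.E \ A) :=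
      mem_FminInter_of_inter_eq hZ hYA (by ext; simp only [mem_inter, mem_union, mem_sdiff]; tauto)
    suffices h : ∀ F ∈ D.F, #(A ∆ F) = #(A ∆ (X ∩ A ∪ Y \ A)) from
      fun F₁ h₁ F₂ h₂ => (h F₁ h₁).trans (h F₂ h₂).symm
    intro F hF
    have hle := hD.card_symmDiff_le_of_delFam hdel hZA hF
    have hge := hD.card_symmDiff_le_of_delFam hdelCompl hZCompl hF
    linarith [hcompl F hF, hcompl _ hZ]

/-- For a nonempty proper subset `A` of the ground set, the twist `D*A` is a matroid
iff `A` is separating in `D_min` and both `D∖A` and `D∖(E−A)` are matroids. -/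
theorem twist_isMatroid_iff (D : SetSystem α) (hD : D.IsDeltaMatroid)
    (A : Finset α) (hAE : A ⊆ D.E) (hne : A.Nonempty) (hproper : A ≠ D.E) :
    (∀ F₁ ∈ D.F, ∀ F₂ ∈ D.F, (A ∆ F₁).card = (A ∆ F₂).card) ↔
      ((∀ F₁ ∈ D.Fmin, ∀ F₂ ∈ D.Fmin, (F₁ ∩ A) ∪ (F₂ \ A) ∈ D.Fmin) ∧
        (∀ G₁ ∈ D.delFam A, ∀ G₂ ∈ D.delFam A, G₁.card = G₂.card) ∧
        (∀ G₁ ∈ D.delFam (D.E \ A), ∀ G₂ ∈ D.delFam (D.E \ A), G₁.card = G₂.card)) :=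
  twist_isMatroid_iff_general D hD A

end SetSystem
end

section
/- Let M be a matroid on a finite ground set E with rank function r, and let A ⊆ E. Then all members of the family {A △ B : B a base of M} have the same cardinality (i.e. the twist M*A is a matroid) if and only if r(A) + r(E − A) = r(E); equivalently, if and only if A is separating in M or A ∈ {∅, E}. -/
open scoped symmDiff Matroid

namespace PaperMatroid

variable {α : Type}

/-!
For a base `B`, `|A ∆ B| = |A| + r(E) - 2 |A ∩ B|`, so the twist is equicardinal iff `|A ∩ B|`
is the same for all bases. Extending a basis of `A` to a base shows that the largest value of
`|A ∩ B|` is `r(A)`. Since `|A ∩ B| + |B - A| = r(E)` and `|B - A| ≤ r(E - A)`, with equality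
for a base extending a basis of `E - A`, the smallest value is `r(E) - r(E - A)`.
-/

lemma _root_.Set.ncard_symmDiff_add_two_mul_ncard_inter_s7 {β : Type*} {s t : Set β}
    (hs : s.Finite) (ht : t.Finite) :
    (s ∆ t).ncard + 2 * (s ∩ t).ncard = s.ncard + t.ncard := by
  have hst : (s ∆ t).ncard = (s \ t).ncard + (t \ s).ncard :=
    Set.ncard_union_eq disjoint_sdiff_sdiff hs.sdiff ht.sdiff
  have hs' := Set.ncard_inter_add_ncard_sdiff_eq_ncard s t hs
  have ht' := Set.ncard_inter_add_ncard_sdiff_eq_ncard t s ht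
  rw [Set.inter_comm t s] at ht'
  omega

lemma _root_.Matroid.IsBasis'.isGreatest_ncard {M : Matroid α} [M.RankFinite] {I X : Set α}
    (hI : M.IsBasis' I X) :
    IsGreatest {n : ℕ | ∃ J, M.Indep J ∧ J ⊆ X ∧ n = J.ncard} I.ncard := by
  refine ⟨⟨I, hI.indep, hI.subset, rfl⟩, ?_⟩
  rintro _ ⟨J, hJ, hJX, rfl⟩
  have hle : J.encard ≤ I.encard := hI.encard_eq_eRk ▸ hJ.encard_le_eRk_of_subset hJX
  rwa [← hJ.finite.cast_ncard_eq, ← hI.indep.finite.cast_ncard_eq, Nat.cast_le] at hle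

lemma _root_.Matroid.IsBasis'.rkFn_eq_ncard {M : Matroid α} [M.RankFinite] {I X : Set α}
    (hI : M.IsBasis' I X) : rkFn M X = I.ncard :=
  hI.isGreatest_ncard.csSup_eq

lemma _root_.Matroid.Indep.ncard_le_rkFn {M : Matroid α} [M.RankFinite] {J X : Set α}
    (hJ : M.Indep J) (hJX : J ⊆ X) : J.ncard ≤ rkFn M X := by
  obtain ⟨I, hI⟩ := M.exists_isBasis' X
  exact hI.rkFn_eq_ncard ▸ hI.isGreatest_ncard.2 ⟨J, hJ, hJX, rfl⟩

lemma _root_.Matroid.IsBase.ncard_inter_le_rkFn {M : Matroid α} [M.RankFinite] {B : Set α}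
    (hB : M.IsBase B) (X : Set α) : (X ∩ B).ncard ≤ rkFn M X :=
  (hB.indep.subset Set.inter_subset_right).ncard_le_rkFn Set.inter_subset_left

lemma exists_isBase_ncard_inter_eq_rkFn (M : Matroid α) [M.RankFinite] (X : Set α) :
    ∃ B, M.IsBase B ∧ (X ∩ B).ncard = rkFn M X := by
  obtain ⟨I, hI⟩ := M.exists_isBasis' X
  obtain ⟨B, hB, hIB⟩ := hI.indep.exists_isBase_superset
  refine ⟨B, hB, ?_⟩
  rw [hI.rkFn_eq_ncard, Set.inter_comm, hI.inter_eq_of_subset_indep hIB hB.indep]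

lemma _root_.Matroid.IsBase.ncard_inter_add_ncard_inter_compl {M : Matroid α} [M.RankFinite]
    {B : Set α} (hB : M.IsBase B) (X : Set α) :
    (X ∩ B).ncard + ((M.E \ X) ∩ B).ncard = rkFn M M.E := by
  rw [hB.isBasis_ground.isBasis'.rkFn_eq_ncard, Set.inter_comm, Set.inter_comm _ B,
    ← Set.inter_sdiff_assoc, Set.inter_eq_self_of_subset_left hB.subset_ground]
  exact Set.ncard_inter_add_ncard_sdiff_eq_ncard B X hB.finite

lemma ncard_inter_isBase_eq_iff (M : Matroid α) [M.RankFinite] (X : Set α) :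
    (∀ B₁ B₂, M.IsBase B₁ → M.IsBase B₂ → (X ∩ B₁).ncard = (X ∩ B₂).ncard) ↔
      rkFn M X + rkFn M (M.E \ X) = rkFn M M.E := by
  constructor
  · intro h
    obtain ⟨B₁, hB₁, h₁⟩ := exists_isBase_ncard_inter_eq_rkFn M X
    obtain ⟨B₂, hB₂, h₂⟩ := exists_isBase_ncard_inter_eq_rkFn M (M.E \ X)
    rw [← h₁, ← h₂, h B₁ B₂ hB₁ hB₂, hB₂.ncard_inter_add_ncard_inter_compl]
  · intro h B₁ B₂ hB₁ hB₂
    have hconst (B) (hB : M.IsBase B) : (X ∩ B).ncard = rkFn M X := by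
      have := hB.ncard_inter_add_ncard_inter_compl X
      have := hB.ncard_inter_le_rkFn X
      have := hB.ncard_inter_le_rkFn (M.E \ X)
      omega
    rw [hconst B₁ hB₁, hconst B₂ hB₂]

lemma ncard_symmDiff_isBase_eq_iff {M : Matroid α} [M.RankFinite] {A : Set α}
    (hA : A.Finite) :
    (∀ B₁ B₂, M.IsBase B₁ → M.IsBase B₂ → (A ∆ B₁).ncard = (A ∆ B₂).ncard) ↔
      ∀ B₁ B₂, M.IsBase B₁ → M.IsBase B₂ →
        (A ∩ B₁).ncard = (A ∩ B₂).ncard := by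
  refine forall₄_congr fun B₁ B₂ hB₁ hB₂ ↦ ?_
  have h₁ := Set.ncard_symmDiff_add_two_mul_ncard_inter_s7 hA hB₁.finite
  have h₂ := Set.ncard_symmDiff_add_two_mul_ncard_inter_s7 hA hB₂.finite
  have := hB₁.ncard_eq_ncard_of_isBase hB₂
  omega

/-- The twist `M*A` is a matroid (its feasible sets `{A ∆ B : B a base of M}` are
equicardinal) iff `r(A) + r(E − A) = r(E)`, i.e. iff `A` is separating in `M` or
`A ∈ {∅, E}`. -/
theorem twist_isMatroid_iff_rank (M : Matroid α) [M.Finite] (A : Set α) (hA : A ⊆ M.E) :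
    (∀ B₁ B₂, M.IsBase B₁ → M.IsBase B₂ → (A ∆ B₁).ncard = (A ∆ B₂).ncard) ↔
      rkFn M A + rkFn M (M.E \ A) = rkFn M M.E :=
  (ncard_symmDiff_isBase_eq_iff (M.set_finite A hA)).trans (ncard_inter_isBase_eq_iff M A)

end PaperMatroid
end

section
/- Let M be a binary matroid on a finite ground set E that is bipartite (every circuit of M has even cardinality), let A ⊆ E, and let N be a matroid on E whose bases are exactly the minimum-cardinality members of {A △ B : B a base of M} (i.e. N = (M*A)_min). Then N is bipartite if and only if A belongs to the bicycle space BI(M). -/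
/-!
Circuits of a binary matroid meet its cocircuits in even sets: a cocircuit `K` is the fundamental
cocircuit of some `k` in a base `B`, the coordinate of `φ k` with respect to `φ '' B` is the
indicator of `K` on the ground set, and the vectors of a circuit sum to zero over `GF(2)`. This
property passes to duals and restrictions, and under it a finite set lies in the circuit space iff
it meets every cocircuit evenly; in particular `E ∈ 𝒞(M)` iff `M✶` is bipartite.

Minimising `|A ∆ B|` over bases `B` means maximising `|A ∩ B|`, i.e. taking `A ∩ B` a basis of `A`,
so `(M*A)_min` is the direct sum `(M ↾ A)✶ ⊕ M ／ A`, where `M ／ A = (M✶ ↾ (E \ A))✶`. By the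
above it is bipartite iff `A ∈ 𝒞(M)` and `E \ A ∈ 𝒞(M✶)`; since `M` is bipartite, `E ∈ 𝒞(M✶)`,
so the second condition is `A ∈ 𝒞(M✶)`.
-/

open scoped symmDiff Matroid

open Set

lemma Set.ncard_symmDiff_add_two_mul_ncard_inter_s8 {α : Type*} {X Y : Set α} (hX : X.Finite)
    (hY : Y.Finite) : (X ∆ Y).ncard + 2 * (X ∩ Y).ncard = X.ncard + Y.ncard := by
  have hXY : X ∆ Y = (X ∪ Y) \ (X ∩ Y) := symmDiff_eq_sup_sdiff_inf X Y
  rw [← ncard_union_add_ncard_inter X Y hX hY, hXY, two_mul, ← add_assoc,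
    ncard_sdiff_add_ncard_of_subset (inter_subset_left.trans subset_union_left) (hX.union hY)]

lemma Set.even_ncard_sdiff_inter_iff {α : Type*} {X Y : Set α} (hYX : Y ⊆ X) (hX : X.Finite)
    (K : Set α) : Even ((X \ Y) ∩ K).ncard ↔ (Even (X ∩ K).ncard ↔ Even (Y ∩ K).ncard) := by
  rw [← ncard_sdiff_add_ncard_of_subset (inter_subset_inter_left K hYX) (hX.inter_of_left K),
    inter_sdiff_distrib_right, Nat.even_add]
  tauto

lemma zmod_two_eq_zero_or_one (a : ZMod 2) : a = 0 ∨ a = 1 := by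
  revert a
  decide

theorem Submodule.exists_dual_apply_eq_zero_iff_of_notMem {K V : Type*} [Field K]
    [AddCommGroup V] [Module K V] {W : Submodule K V} {v : V} (hv : v ∉ W) :
    ∃ f : Module.Dual K V, ∀ u ∈ W ⊔ K ∙ v, f u = 0 ↔ u ∈ W := by
  obtain ⟨f, hfv, hfW⟩ := exists_dual_map_eq_bot_of_notMem hv inferInstance
  have hfW' : ∀ w ∈ W, f w = 0 := fun w hw ↦ by simpa [hfW] using mem_map_of_mem (f := f) hw
  refine ⟨f, fun u hu ↦ ?_⟩
  obtain ⟨w, hw, _, hy, rfl⟩ := mem_sup.1 hu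
  obtain ⟨a, rfl⟩ := mem_span_singleton.1 hy
  rw [map_add, map_smul, hfW' w hw, zero_add, smul_eq_mul, mul_eq_zero, or_iff_left hfv,
    Submodule.add_mem_iff_right W hw]
  by_cases ha : a = 0
  · simp [ha]
  · simp [ha, smul_mem_iff W ha, hv]

namespace Matroid

variable {α : Type*} {M M₁ M₂ : Matroid α} {A B C K R : Set α} {k x : α}

lemma disjointSum_restrict_left (h : Disjoint M₁.E M₂.E) :
    M₁.disjointSum M₂ h ↾ M₁.E = M₁ := by
  refine ext_indep rfl fun I hI ↦ ?_
  rw [restrict_ground_eq] at hI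
  have hI₂ : I ∩ M₂.E = ∅ := (h.mono_left hI).inter_eq
  simp [hI₂, inter_eq_self_of_subset_left hI, hI, subset_union_of_subset_left hI]

lemma disjointSum_restrict_right (h : Disjoint M₁.E M₂.E) :
    M₁.disjointSum M₂ h ↾ M₂.E = M₂ := by
  rw [disjointSum_comm, disjointSum_restrict_left]

lemma isCircuit_disjointSum_iff (h : Disjoint M₁.E M₂.E) :
    (M₁.disjointSum M₂ h).IsCircuit C ↔ M₁.IsCircuit C ∨ M₂.IsCircuit C := by
  set S := M₁.disjointSum M₂ h
  have h₁ := restrict_isCircuit_iff (M := S) (C := C) (R := M₁.E) (by simp [S])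
  have h₂ := restrict_isCircuit_iff (M := S) (C := C) (R := M₂.E) (by simp [S])
  rw [disjointSum_restrict_left] at h₁
  rw [disjointSum_restrict_right] at h₂
  rw [h₁, h₂, ← and_or_left, iff_self_and]
  intro hC
  by_contra! hC₁₂
  have hind : ∀ {N : Matroid α}, ¬ C ⊆ N.E → S.Indep (C ∩ N.E) := fun hN ↦
    hC.ssubset_indep (inter_subset_left.ssubset_of_ne fun he ↦ hN (he ▸ inter_subset_right))
  have hi₁ := hind hC₁₂.1
  have hi₂ := hind hC₁₂.2
  simp only [S, disjointSum_indep_iff, inter_assoc, inter_self] at hi₁ hi₂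
  exact hC.not_indep
    (disjointSum_indep_iff.2 ⟨hi₁.1, hi₂.2.1, hC.subset_ground.trans (by simp [S])⟩)

lemma disjoint_ground_dual_restrict_contract (M : Matroid α) (X : Set α) :
    Disjoint (M ↾ X)✶.E (M ／ X).E := by
  simpa using disjoint_sdiff_right

lemma IsBase.isBasis_inter_iff_forall_ncard_le [M.Finite] (hB : M.IsBase B) (hA : A ⊆ M.E) :
    M.IsBasis (A ∩ B) A ↔ ∀ B', M.IsBase B' → (A ∩ B').ncard ≤ (A ∩ B).ncard := by
  refine ⟨fun h B' hB' ↦ ?_, fun h ↦ ?_⟩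
  · obtain ⟨J, hJ, hJB'⟩ :=
      (hB'.indep.inter_left A).subset_isBasis_of_subset inter_subset_left hA
    rw [h.restrict_isBase.ncard_eq_ncard_of_isBase hJ.restrict_isBase]
    exact ncard_le_ncard hJB' (M.set_finite J hJ.indep.subset_ground)
  obtain ⟨J, hJ, hBJ⟩ := (hB.indep.inter_left A).subset_isBasis_of_subset inter_subset_left hA
  obtain ⟨B', hB', hJB'⟩ := hJ.indep.exists_isBase_superset
  have hJle : J.ncard ≤ (A ∩ B).ncard := calc
    J.ncard ≤ (A ∩ B').ncard :=
      ncard_le_ncard (subset_inter hJ.subset hJB') (M.set_finite _ (inter_subset_left.trans hA))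
    _ ≤ (A ∩ B).ncard := h B' hB'
  rwa [eq_of_subset_of_ncard_le hBJ hJle (M.set_finite J hJ.indep.subset_ground)]

lemma IsCocircuit.exists_eq_fundCocircuit (hK : M.IsCocircuit K) :
    ∃ B k, M.IsBase B ∧ k ∈ B ∧ K = M.fundCocircuit k B := by
  obtain ⟨k, hk⟩ := hK.nonempty
  obtain ⟨B', hB', hKB'⟩ := (hK.isCircuit.sdiff_singleton_indep hk).exists_isBase_superset
  rw [sdiff_singleton_subset_iff] at hKB'
  have hkB' : k ∉ B' := fun hkB' ↦
    hK.isCircuit.not_indep (hB'.indep.subset (by rwa [insert_eq_of_mem hkB'] at hKB'))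
  refine ⟨M.E \ B', k, hB'.compl_isBase_of_dual, ⟨hK.subset_ground hk, hkB'⟩, ?_⟩
  rw [fundCocircuit, dual_ground, sdiff_sdiff_cancel_left (show B' ⊆ M.E from hB'.subset_ground)]
  exact hK.isCircuit.eq_fundCircuit_of_subset hB'.indep hKB'

lemma IsBase.mem_fundCocircuit_iff_indep (hB : M.IsBase B) (hk : k ∈ B) (hx : x ∈ M.E) :
    x ∈ M.fundCocircuit k B ↔ x ∉ B \ {k} ∧ M.Indep (insert x (B \ {k})) := by
  obtain rfl | hxk := eq_or_ne x k
  · simp [mem_fundCocircuit, insert_eq_of_mem hk, hB.indep]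
  by_cases hxB : x ∈ B
  · have hxK : x ∉ M.fundCocircuit k B := fun hxK ↦
      hxk (by simpa using (M.fundCocircuit_inter_eq hk).subset ⟨hxK, hxB⟩)
    simp [hxK, hxB, hxk]
  rw [hB.mem_fundCocircuit_iff_mem_fundCircuit,
    hB.indep.mem_fundCircuit_iff (by rwa [hB.closure_eq]) hxB, insert_sdiff_singleton_comm hxk]
  simp [hxB]

def CocircuitsMeetCircuitsEvenly (M : Matroid α) : Prop :=
  ∀ ⦃C K⦄, M.IsCircuit C → M.IsCocircuit K → Even (C ∩ K).ncard

lemma CocircuitsMeetCircuitsEvenly.dual (hM : M.CocircuitsMeetCircuitsEvenly) :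
    M✶.CocircuitsMeetCircuitsEvenly := fun C K hC hK ↦ by
  rw [inter_comm]
  exact hM (by rwa [isCocircuit_def, dual_dual] at hK) hC

lemma CocircuitsMeetCircuitsEvenly.restrict (hM : M.CocircuitsMeetCircuitsEvenly)
    (hR : R ⊆ M.E) : (M ↾ R).CocircuitsMeetCircuitsEvenly := by
  intro C K hC hK
  rw [← delete_compl hR, delete_isCircuit_iff] at hC
  rw [← delete_compl hR, isCocircuit_def, dual_delete] at hK
  obtain ⟨K', hK', hKK', hK'K⟩ := hK.exists_subset_isCircuit_of_contract
  have hCK' : C ∩ K' = C ∩ K := subset_antisymm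
    (fun x hx ↦ ⟨hx.1, (hK'K hx.2).resolve_right (hC.2.notMem_of_mem_left hx.1)⟩)
    (inter_subset_inter_right _ hKK')
  exact hCK' ▸ hM hC.1 hK'

section Representation

def IsRepresentation {V : Type*} [AddCommGroup V] (M : Matroid α) (𝕜 : Type*) [Field 𝕜]
    [Module 𝕜 V] (φ : α → V) : Prop :=
  ∀ I ⊆ M.E, M.Indep I ↔ LinearIndepOn 𝕜 φ I

variable {𝕜 V : Type*} [Field 𝕜] [AddCommGroup V] [Module 𝕜 V] {φ : α → V} {J : Set α}

lemma IsRepresentation.indep_insert_iff (hφ : M.IsRepresentation 𝕜 φ) (hJ : M.Indep J)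
    (hx : x ∈ M.E) : x ∉ J ∧ M.Indep (insert x J) ↔ φ x ∉ Submodule.span 𝕜 (φ '' J) := by
  by_cases hxJ : x ∈ J
  · simpa [hxJ] using Submodule.subset_span (mem_image_of_mem φ hxJ)
  rw [hφ _ (insert_subset hx hJ.subset_ground), linearIndepOn_insert hxJ,
    ← hφ _ hJ.subset_ground]
  simp [hxJ, hJ]

lemma IsRepresentation.mem_span_of_isBase (hφ : M.IsRepresentation 𝕜 φ) (hB : M.IsBase B)
    (hx : x ∈ M.E) : φ x ∈ Submodule.span 𝕜 (φ '' B) := by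
  by_contra h
  obtain ⟨hxB, hind⟩ := (hφ.indep_insert_iff hB.indep hx).2 h
  exact (hB.insert_dep ⟨hx, hxB⟩).not_indep hind

lemma IsRepresentation.mem_fundCocircuit_iff (hφ : M.IsRepresentation 𝕜 φ) (hB : M.IsBase B)
    (hk : k ∈ B) (hx : x ∈ M.E) :
    x ∈ M.fundCocircuit k B ↔ φ x ∉ Submodule.span 𝕜 (φ '' (B \ {k})) := by
  rw [hB.mem_fundCocircuit_iff_indep hk hx, hφ.indep_insert_iff (hB.indep.subset sdiff_subset) hx]

lemma IsRepresentation.sum_eq_zero_of_isCircuit [Module (ZMod 2) V]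
    (hφ : M.IsRepresentation (ZMod 2) φ) {s : Finset α} (hC : M.IsCircuit s) :
    ∑ x ∈ s, φ x = 0 := by
  classical
  obtain ⟨g, hg, i, his, hgi⟩ :=
    not_linearIndepOn_finset_iff.1 ((hφ _ hC.subset_ground).not.1 hC.not_indep)
  set t := s.filter (g · ≠ 0)
  have hsum : ∑ x ∈ t, φ x = 0 := by
    rw [← hg, Finset.sum_filter]
    refine Finset.sum_congr rfl fun x _ ↦ ?_
    obtain hx | hx := zmod_two_eq_zero_or_one (g x) <;> simp [hx]
  suffices t = s by rwa [this] at hsum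
  by_contra hne
  have hts : (t : Set α) ⊂ s := by simpa using (Finset.filter_subset _ s).ssubset_of_ne hne
  have hind := (hφ _ (hts.subset.trans hC.subset_ground)).1 (hC.ssubset_indep hts)
  exact one_ne_zero <| linearIndepOn_finset_iff.1 hind (fun _ ↦ 1) (by simpa using hsum) i
    (by simp [t, his, hgi])

theorem IsRepresentation.cocircuitsMeetCircuitsEvenly [Module (ZMod 2) V] [M.Finite]
    (hφ : M.IsRepresentation (ZMod 2) φ) : M.CocircuitsMeetCircuitsEvenly := by
  classical
  intro C K hC hK
  obtain ⟨B, k, hB, hk, rfl⟩ := hK.exists_eq_fundCocircuit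
  obtain ⟨f, hf⟩ := Submodule.exists_dual_apply_eq_zero_iff_of_notMem
    ((hφ.mem_fundCocircuit_iff hB hk (hB.subset_ground hk)).1 (M.mem_fundCocircuit k B))
  have hfK : ∀ x ∈ M.E, f (φ x) = if x ∈ M.fundCocircuit k B then 1 else 0 := by
    intro x hx
    have hspan := hφ.mem_span_of_isBase hB hx
    rw [← insert_sdiff_self_of_mem hk, image_insert_eq, Submodule.span_insert, sup_comm] at hspan
    rw [hφ.mem_fundCocircuit_iff hB hk hx, ← hf _ hspan]
    obtain h | h := zmod_two_eq_zero_or_one (f (φ x)) <;> simp [h]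
  obtain ⟨s, rfl⟩ := (M.set_finite C hC.subset_ground).exists_finset_coe
  have hsum := congrArg f (hφ.sum_eq_zero_of_isCircuit hC)
  rw [map_sum, map_zero, Finset.sum_congr rfl fun x hx ↦ hfK x (hC.subset_ground hx),
    Finset.sum_boole, ZMod.natCast_eq_zero_iff_even, ← ncard_coe_finset, Finset.coe_filter] at hsum
  exact hsum

end Representation

end Matroid

namespace PaperMatroid

variable {α : Type} {M N : Matroid α} {A C F R X Y : Set α}

lemma isCircuit_iff : IsCircuit M C ↔ M.IsCircuit C := by
  rw [Matroid.isCircuit_iff_forall_ssubset, Matroid.Dep, IsCircuit]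
  tauto

lemma bipartite_iff : Bipartite M ↔ ∀ C, M.IsCircuit C → Even C.ncard := by
  simp only [Bipartite, isCircuit_iff]

lemma mem_circuitSpace : X ∈ CircuitSpace M ↔ ∃ 𝒞 : Finset (Set α),
    (∀ C ∈ 𝒞, M.IsCircuit C) ∧ (𝒞 : Set (Set α)).Pairwise Disjoint ∧ X = ⋃₀ ↑𝒞 := by
  simp only [CircuitSpace, mem_ofPred_eq, isCircuit_iff]

theorem Binary.cocircuitsMeetCircuitsEvenly [M.Finite] (hM : Binary M) :
    M.CocircuitsMeetCircuitsEvenly := by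
  obtain ⟨V, _, _, φ, hφ⟩ := hM
  exact Matroid.IsRepresentation.cocircuitsMeetCircuitsEvenly hφ

lemma empty_mem_circuitSpace : ∅ ∈ CircuitSpace M :=
  mem_circuitSpace.2 ⟨∅, by simp, by simp, by simp⟩

lemma union_mem_circuitSpace (hC : M.IsCircuit C) (hY : Y ∈ CircuitSpace M)
    (hCY : Disjoint C Y) : C ∪ Y ∈ CircuitSpace M := by
  classical
  obtain ⟨𝒞, h𝒞, hdisj, rfl⟩ := mem_circuitSpace.1 hY
  refine mem_circuitSpace.2 ⟨insert C 𝒞, by simpa [hC] using h𝒞, ?_, by simp⟩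
  rw [Finset.coe_insert]
  refine hdisj.insert fun D hD _ ↦ ?_
  have hCD := hCY.mono_right (subset_sUnion_of_mem hD)
  exact ⟨hCD, hCD.symm⟩

lemma mem_circuitSpace_restrict_iff (hR : R ⊆ M.E) (hXR : X ⊆ R) :
    X ∈ CircuitSpace (M ↾ R) ↔ X ∈ CircuitSpace M := by
  simp only [mem_circuitSpace, Matroid.restrict_isCircuit_iff hR]
  constructor
  · rintro ⟨𝒞, h𝒞, hdisj, rfl⟩
    exact ⟨𝒞, fun C hC ↦ (h𝒞 C hC).1, hdisj, rfl⟩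
  · rintro ⟨𝒞, h𝒞, hdisj, rfl⟩
    exact ⟨𝒞, fun C hC ↦ ⟨h𝒞 C hC, (subset_sUnion_of_mem hC).trans hXR⟩, hdisj, rfl⟩

theorem mem_circuitSpace_iff (hP : M.CocircuitsMeetCircuitsEvenly) (hX : X.Finite) :
    X ∈ CircuitSpace M ↔ X ⊆ M.E ∧ ∀ K, M.IsCocircuit K → Even (X ∩ K).ncard := by
  refine ⟨fun h ↦ ?_, ?_⟩
  · obtain ⟨𝒞, h𝒞, hdisj, rfl⟩ := mem_circuitSpace.1 h
    refine ⟨sUnion_subset fun C hC ↦ (h𝒞 C hC).subset_ground, fun K hK ↦ ?_⟩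
    rw [sUnion_eq_biUnion, iUnion₂_inter, 𝒞.finite_toSet.ncard_biUnion
      (fun C hC ↦ (hX.subset (subset_sUnion_of_mem hC)).inter_of_left K)
      (fun C hC D hD hne ↦ (hdisj hC hD hne).mono inter_subset_left inter_subset_left),
      finsum_mem_coe_finset]
    exact Finset.even_sum _ fun C hC ↦ hP (h𝒞 C hC) hK
  rintro ⟨hXE, hXK⟩
  induction hn : X.ncard using Nat.strong_induction_on generalizing X with
  | _ n ih =>
  obtain rfl | ⟨e, he⟩ := X.eq_empty_or_nonempty
  · exact empty_mem_circuitSpace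
  -- an independent set meets some cocircuit in a single element
  have hdep : M.Dep X := by
    refine ⟨fun hind ↦ ?_, hXE⟩
    obtain ⟨K, hK, hKX⟩ := hind.exists_isCocircuit_inter_eq_mem he
    have hodd := hXK K hK
    rw [inter_comm, hKX, ncard_singleton] at hodd
    exact Nat.not_even_one hodd
  obtain ⟨C, hCX, hC⟩ := hdep.exists_isCircuit_subset
  have hlt : (X \ C).ncard < n := hn ▸ ncard_lt_ncard
    (sdiff_ssubset_left_iff.2 (by rw [inter_eq_self_of_subset_right hCX]; exact hC.nonempty)) hX
  have hrest : X \ C ∈ CircuitSpace M := ih _ hlt hX.sdiff (sdiff_subset.trans hXE)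
    (fun K hK ↦ (even_ncard_sdiff_inter_iff hCX hX K).2 (iff_of_true (hXK K hK) (hP hC hK))) rfl
  simpa [union_sdiff_cancel hCX] using union_mem_circuitSpace hC hrest disjoint_sdiff_right

theorem ground_mem_circuitSpace_iff (hP : M.CocircuitsMeetCircuitsEvenly) (hE : M.E.Finite) :
    M.E ∈ CircuitSpace M ↔ Bipartite M✶ := by
  rw [mem_circuitSpace_iff hP hE, bipartite_iff, and_iff_right subset_rfl]
  exact forall₂_congr fun K hK ↦ by rw [inter_eq_self_of_subset_right hK.subset_ground]

theorem sdiff_mem_circuitSpace_iff (hP : M.CocircuitsMeetCircuitsEvenly)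
    (hX : X ∈ CircuitSpace M) (hXfin : X.Finite) (hYX : Y ⊆ X) :
    X \ Y ∈ CircuitSpace M ↔ Y ∈ CircuitSpace M := by
  obtain ⟨hXE, hXK⟩ := (mem_circuitSpace_iff hP hXfin).1 hX
  rw [mem_circuitSpace_iff hP hXfin.sdiff, mem_circuitSpace_iff hP (hXfin.subset hYX),
    and_iff_right (sdiff_subset.trans hXE), and_iff_right (hYX.trans hXE)]
  exact forall₂_congr fun K hK ↦ by
    rw [even_ncard_sdiff_inter_iff hYX hXfin, iff_true_left (hXK K hK)]

theorem bipartite_dual_restrict_iff (hP : M.CocircuitsMeetCircuitsEvenly) (hR : R ⊆ M.E)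
    (hRfin : R.Finite) : Bipartite (M ↾ R)✶ ↔ R ∈ CircuitSpace M := by
  rw [← ground_mem_circuitSpace_iff (hP.restrict hR) hRfin, Matroid.restrict_ground_eq,
    mem_circuitSpace_restrict_iff hR subset_rfl]

theorem bipartite_contract_iff (hP : M.CocircuitsMeetCircuitsEvenly) (hbip : Bipartite M)
    (hA : A ⊆ M.E) (hE : M.E.Finite) : Bipartite (M ／ A) ↔ A ∈ CircuitSpace M✶ := by
  have hEc : M✶.E ∈ CircuitSpace M✶ :=
    (ground_mem_circuitSpace_iff hP.dual hE).2 (by rwa [Matroid.dual_dual])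
  rw [← Matroid.dual_delete_dual, Matroid.delete_eq_restrict,
    bipartite_dual_restrict_iff hP.dual sdiff_subset hE.sdiff,
    sdiff_mem_circuitSpace_iff hP.dual hEc hE hA]

lemma bipartite_disjointSum_iff {M₁ M₂ : Matroid α} (h : Disjoint M₁.E M₂.E) :
    Bipartite (M₁.disjointSum M₂ h) ↔ Bipartite M₁ ∧ Bipartite M₂ := by
  simp only [bipartite_iff, Matroid.isCircuit_disjointSum_iff, or_imp, forall_and]

section Twist

variable [M.Finite]

lemma minTwistMem_iff_s8 (hA : A ⊆ M.E) :
    MinTwistMem M A F ↔ ∃ B, M.IsBase B ∧ M.IsBasis (A ∩ B) A ∧ F = A ∆ B := by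
  have hcard : ∀ {B B'}, M.IsBase B → M.IsBase B' →
      ((A ∆ B).ncard ≤ (A ∆ B').ncard ↔ (A ∩ B').ncard ≤ (A ∩ B).ncard) := fun hB hB' ↦ by
    have h := ncard_symmDiff_add_two_mul_ncard_inter_s8 (M.set_finite A hA)
      (M.set_finite _ hB.subset_ground)
    have h' := ncard_symmDiff_add_two_mul_ncard_inter_s8 (M.set_finite A hA)
      (M.set_finite _ hB'.subset_ground)
    have := hB.ncard_eq_ncard_of_isBase hB'
    omega
  constructor
  · rintro ⟨⟨B, hB, rfl⟩, hmin⟩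
    exact ⟨B, hB, (hB.isBasis_inter_iff_forall_ncard_le hA).2 fun B' hB' ↦
      (hcard hB hB').1 (hmin _ ⟨B', hB', rfl⟩), rfl⟩
  rintro ⟨B, hB, hAB, rfl⟩
  refine ⟨⟨B, hB, rfl⟩, ?_⟩
  rintro _ ⟨B', hB', rfl⟩
  exact (hcard hB hB').2 ((hB.isBasis_inter_iff_forall_ncard_le hA).1 hAB B' hB')

theorem eq_disjointSum_of_isBase_iff_minTwistMem (hA : A ⊆ M.E) (hNE : N.E = M.E)
    (hNB : ∀ F, N.IsBase F ↔ MinTwistMem M A F) :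
    N = (M ↾ A)✶.disjointSum (M ／ A) (M.disjoint_ground_dual_restrict_contract A) := by
  refine Matroid.ext_indep ?_ fun X hX ↦ ?_
  · rw [hNE, Matroid.disjointSum_ground_eq, Matroid.dual_ground, Matroid.restrict_ground_eq,
      Matroid.contract_ground, union_sdiff_cancel hA]
  rw [hNE] at hX
  simp only [Matroid.disjointSum_indep_iff, Matroid.dual_ground, Matroid.restrict_ground_eq,
    Matroid.contract_ground, Matroid.dual_indep_iff_exists', Matroid.isBase_restrict_iff hA,
    inter_subset_right, true_and, union_sdiff_cancel hA, hX, and_true, ← inter_sdiff_assoc,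
    inter_eq_self_of_subset_left hX]
  constructor
  · intro hXN
    obtain ⟨F, hF, hXF⟩ := Matroid.indep_iff.1 hXN
    obtain ⟨B, hB, hAB, rfl⟩ := (minTwistMem_iff_s8 hA).1 ((hNB F).1 hF)
    refine ⟨⟨A ∩ B, hAB, ?_⟩, hAB.contract_indep_iff.2 ⟨hB.indep.subset ?_, disjoint_sdiff_right⟩⟩
    · exact disjoint_left.2 fun x hx hxB ↦
        (mem_symmDiff.1 (hXF hx.1)).elim (fun h ↦ h.2 hxB.2) fun h ↦ h.2 hx.2
    · exact union_subset (fun x hx ↦ ((mem_symmDiff.1 (hXF hx.1)).resolve_left fun h ↦ hx.2 h.1).1)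
        inter_subset_right
  rintro ⟨⟨I, hI, hXI⟩, hXc⟩
  obtain ⟨hind, -⟩ := hI.contract_indep_iff.1 hXc
  obtain ⟨B, hB, hsub⟩ := hind.exists_isBase_superset
  have hAB : A ∩ B = I := (hI.eq_of_subset_indep (hB.indep.inter_left A)
    (subset_inter hI.subset (subset_union_right.trans hsub)) inter_subset_left).symm
  refine Matroid.indep_iff.2 ⟨A ∆ B, (hNB _).2 ((minTwistMem_iff_s8 hA).2 ⟨B, hB, hAB ▸ hI, rfl⟩),
    fun x hx ↦ ?_⟩
  by_cases hxA : x ∈ A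
  · exact Or.inl ⟨hxA, fun hxB ↦ hXI.notMem_of_mem_left ⟨hx, hxA⟩ (hAB ▸ ⟨hxA, hxB⟩)⟩
  · exact Or.inr ⟨hsub (Or.inl ⟨hx, hxA⟩), hxA⟩

end Twist

/-- For a binary bipartite matroid `M` and `A ⊆ E`, the matroid `(M*A)_min` is
bipartite iff `A` belongs to the bicycle space of `M`. -/
theorem bipartite_twist_min_iff (M : Matroid α) [M.Finite] (hbin : Binary M)
    (hbip : Bipartite M) (A : Set α) (hA : A ⊆ M.E)
    (N : Matroid α) (hNE : N.E = M.E) (hNB : ∀ B, N.IsBase B ↔ MinTwistMem M A B) :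
    Bipartite N ↔ A ∈ BicycleSpace M := by
  have hP := hbin.cocircuitsMeetCircuitsEvenly
  rw [eq_disjointSum_of_isBase_iff_minTwistMem hA hNE hNB, bipartite_disjointSum_iff,
    bipartite_dual_restrict_iff hP hA (M.set_finite A hA),
    bipartite_contract_iff hP hbip hA M.ground_finite]
  rfl

end PaperMatroid
end

section
/- Let D = (E,𝓕) be a vf-safe delta-matroid and let e ∈ E. Then: (1) e is a coloop of D if and only if e is a loop of D*{e}; and (2) e is neither a coloop nor a ribbon loop of D if and only if e is a non-trivial orientable ribbon loop of D*{e}. -/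
open scoped symmDiff

namespace SetSystem

variable {α : Type} [DecidableEq α]

/-!
Write `m` for the minimum size of a feasible set of `D` and suppose `e` is a ribbon loop of `D`,
i.e. no feasible set of size `m` contains `e`. The exchange axiom shows that every feasible set
contains a minimum one. If no feasible set of size `m + 1` contains `e`, then `F₀ ∪ e` (for `F₀`
minimum) is a minimum feasible set of `D*{e}` containing `e`. Otherwise let `F₁ ∋ e` be
feasible of size `m + 1`; then `F₁ - e` is feasible, and applying the same facts inside the
delta-matroid `D*{e}` shows that `F₀ ∪ e` is feasible for every minimum `F₀`. This makes `F₁`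
a minimum feasible set of `(D+e)*{e} = (D*{e})*̄{e}`. Conversely, a minimum feasible set
`F₂ ∋ e` of `D` yields the feasible set `F₂ - e` of size `m - 1` in both twisted systems,
while their feasible sets containing `e` have size at least `m + 1`.
-/

section

open Finset

variable {D : SetSystem α} {e : α} {A F F₀ F₁ G K : Finset α}

theorem singleton_symmDiff_of_mem (h : e ∈ F) : {e} ∆ F = F.erase e := by
  rw [symmDiff_of_le (singleton_subset_iff.2 h), sdiff_singleton_eq_erase]

theorem singleton_symmDiff_of_notMem (h : e ∉ F) : {e} ∆ F = insert e F := by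
  rw [(disjoint_singleton_left.2 h).symmDiff_eq_sup, insert_eq]
  rfl

theorem mem_twist_iff : G ∈ (D.twist A).F ↔ A ∆ G ∈ D.F := by
  simp only [twist, mem_image]
  constructor
  · rintro ⟨F, hF, rfl⟩
    rwa [symmDiff_symmDiff_cancel_left]
  · exact fun h => ⟨A ∆ G, h, symmDiff_symmDiff_cancel_left A G⟩

theorem mem_twist_singleton_of_mem (h : e ∈ G) : G ∈ (D.twist {e}).F ↔ G.erase e ∈ D.F := by
  rw [mem_twist_iff, singleton_symmDiff_of_mem h]

theorem mem_twist_singleton_of_notMem (h : e ∉ G) :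
    G ∈ (D.twist {e}).F ↔ insert e G ∈ D.F := by
  rw [mem_twist_iff, singleton_symmDiff_of_notMem h]

theorem twist_twist (D : SetSystem α) (A : Finset α) : (D.twist A).twist A = D := by
  simp only [twist, image_image, Function.comp_def, symmDiff_symmDiff_cancel_left,
    image_id']

theorem mem_lc_of_notMem (h : e ∉ G) : G ∈ (D.lc e).F ↔ G ∈ D.F := by
  simp only [lc, mem_symmDiff, mem_image, mem_filter]
  have : ¬ ∃ F, (F ∈ D.F ∧ e ∉ F) ∧ insert e F = G := by
    rintro ⟨F, -, rfl⟩
    exact h (mem_insert_self e F)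
  simp only [this, not_false_eq_true, and_true, false_and, or_false]

theorem mem_lc_insert (h : e ∉ G) :
    insert e G ∈ (D.lc e).F ↔ Xor (insert e G ∈ D.F) (G ∈ D.F) := by
  have hins : (∃ F, (F ∈ D.F ∧ e ∉ F) ∧ insert e F = insert e G) ↔ G ∈ D.F :=
    ⟨fun ⟨F, ⟨hF, heF⟩, hFG⟩ => by
      rwa [← erase_insert h, ← hFG, erase_insert heF],
      fun hG => ⟨G, ⟨hG, h⟩, rfl⟩⟩
  simp only [lc, mem_symmDiff, mem_image, mem_filter, hins]
  rfl

theorem lcSet_singleton (D : SetSystem α) (e : α) : D.lcSet {e} = D.lc e := by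
  rw [lcSet, toList_singleton]
  rfl

theorem twist_singleton_dpivot_singleton (D : SetSystem α) (e : α) :
    (D.twist {e}).dpivot {e} = (D.lc e).twist {e} := by
  rw [dpivot, twist_twist, lcSet_singleton]

theorem mem_lc_twist_singleton_of_mem (h : e ∈ G) :
    G ∈ ((D.lc e).twist {e}).F ↔ G.erase e ∈ D.F := by
  rw [mem_twist_singleton_of_mem h, mem_lc_of_notMem (notMem_erase e G)]

theorem mem_lc_twist_singleton_of_notMem (h : e ∉ G) :
    G ∈ ((D.lc e).twist {e}).F ↔ Xor (insert e G ∈ D.F) (G ∈ D.F) := by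
  rw [mem_twist_singleton_of_notMem h, mem_lc_insert h]

theorem isColoop_iff_isLoop_twist_singleton : D.IsColoop e ↔ (D.twist {e}).IsLoop e := by
  constructor
  · intro h G hG heG
    exact notMem_erase e G (h _ ((mem_twist_singleton_of_mem heG).1 hG))
  · intro h F hF
    by_contra heF
    refine h (insert e F) ?_ (mem_insert_self e F)
    rwa [mem_twist_singleton_of_mem (mem_insert_self e F), erase_insert heF]

theorem card_le_of_mem_Fmin (hF₀ : F₀ ∈ D.Fmin) (hF : F ∈ D.F) : F₀.card ≤ F.card :=
  (mem_filter.1 hF₀).2 F hF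

theorem mem_of_mem_Fmin (hF₀ : F₀ ∈ D.Fmin) : F₀ ∈ D.F :=
  (mem_filter.1 hF₀).1

theorem mem_Fmin_of_card_le (hF₀ : F₀ ∈ D.Fmin) (hF : F ∈ D.F) (h : F.card ≤ F₀.card) :
    F ∈ D.Fmin :=
  mem_filter.2 ⟨hF, fun _ hF' => h.trans (card_le_of_mem_Fmin hF₀ hF')⟩

theorem Fmin_nonempty_s12 (h : D.F.Nonempty) : D.Fmin.Nonempty := by
  obtain ⟨F₀, hF₀, hmin⟩ := D.F.exists_min_image card h
  exact ⟨F₀, mem_filter.2 ⟨hF₀, hmin⟩⟩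

theorem card_eq_of_mem_Fmin (hF₀ : F₀ ∈ D.Fmin) (hF : F ∈ D.Fmin) : F.card = F₀.card :=
  le_antisymm (card_le_of_mem_Fmin hF (mem_of_mem_Fmin hF₀))
    (card_le_of_mem_Fmin hF₀ (mem_of_mem_Fmin hF))

theorem isRibbonLoop_of_card_lt (hF : F ∈ D.F) (h : ∀ G ∈ D.F, e ∈ G → F.card < G.card) :
    D.IsRibbonLoop e := fun G hG heG =>
  (card_le_of_mem_Fmin hG hF).not_gt (h G (mem_of_mem_Fmin hG) heG)

theorem card_lt_of_mem_twist_singleton (hF₀ : F₀ ∈ D.Fmin) (hG : G ∈ (D.twist {e}).F)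
    (heG : e ∈ G) : F₀.card < G.card := by
  have := card_le_of_mem_Fmin hF₀ ((mem_twist_singleton_of_mem heG).1 hG)
  rw [card_erase_of_mem heG] at this
  have := card_pos.2 ⟨e, heG⟩
  omega

theorem card_lt_of_mem_lc_twist_singleton (hF₀ : F₀ ∈ D.Fmin)
    (hG : G ∈ ((D.lc e).twist {e}).F) (heG : e ∈ G) : F₀.card < G.card :=
  card_lt_of_mem_twist_singleton hF₀
    ((mem_twist_singleton_of_mem heG).2 ((mem_lc_twist_singleton_of_mem heG).1 hG)) heG

section MinimumContainingE

variable (hF : F ∈ D.Fmin) (heF : e ∈ F)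
include hF heF

theorem isRibbonLoop_twist_of_mem_Fmin : (D.twist {e}).IsRibbonLoop e := by
  refine isRibbonLoop_of_card_lt (F := F.erase e) ?_ fun G hG heG => ?_
  · rw [mem_twist_singleton_of_notMem (notMem_erase e F), insert_erase heF]
    exact mem_of_mem_Fmin hF
  · exact (card_erase_lt_of_mem heF).trans (card_lt_of_mem_twist_singleton hF hG heG)

theorem isRibbonLoop_lc_twist_of_mem_Fmin : ((D.lc e).twist {e}).IsRibbonLoop e := by
  refine isRibbonLoop_of_card_lt (F := F.erase e) ?_ fun G hG heG => ?_
  · rw [mem_lc_twist_singleton_of_notMem (notMem_erase e F), insert_erase heF]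
    refine Or.inl ⟨mem_of_mem_Fmin hF, fun h => ?_⟩
    exact (card_le_of_mem_Fmin hF h).not_gt (card_erase_lt_of_mem heF)
  · exact (card_erase_lt_of_mem heF).trans (card_lt_of_mem_lc_twist_singleton hF hG heG)

end MinimumContainingE

theorem IsDeltaMatroid.exists_mem_Fmin_subset_s12 (hD : D.IsDeltaMatroid) (hK : K ∈ D.F) :
    ∃ H ∈ D.Fmin, H ⊆ K := by
  -- An exchange from `u ∈ H \ K` towards `K` either shrinks `H` or brings it closer to `K`.
  obtain ⟨H, hH, hmin⟩ := D.Fmin.exists_min_image (fun H => (H \ K).card) (Fmin_nonempty_s12 hD.1)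
  refine ⟨H, hH, ?_⟩
  by_contra hHK
  obtain ⟨u, huH, huK⟩ := not_subset.1 hHK
  obtain ⟨v, hv, hfeas⟩ :=
    hD.2.2 H (mem_of_mem_Fmin hH) K hK u (mem_symmDiff.2 (Or.inl ⟨huH, huK⟩))
  rcases mem_symmDiff.1 hv with ⟨hvH, -⟩ | ⟨hvK, hvH⟩
  · have huv : {u, v} ⊆ H := insert_subset huH (singleton_subset_iff.2 hvH)
    rw [symmDiff_of_ge huv] at hfeas
    exact (card_le_of_mem_Fmin hH hfeas).not_gt
      (card_lt_card (sdiff_ssubset huv (insert_nonempty u {v})))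
  · have hswap : H ∆ {u, v} = insert v (H.erase u) := by
      ext x
      simp only [mem_symmDiff, mem_insert, mem_singleton, mem_erase]
      by_cases hxu : x = u <;> by_cases hxv : x = v <;> simp_all
    rw [hswap] at hfeas
    have hcard : (insert v (H.erase u)).card = H.card := by
      rw [card_insert_of_notMem fun hv' => hvH (mem_of_mem_erase hv'), card_erase_of_mem huH,
        Nat.sub_add_cancel (card_pos.2 ⟨u, huH⟩)]
    have hcloser : insert v (H.erase u) \ K = (H \ K).erase u := by
      ext x
      simp only [mem_sdiff, mem_insert, mem_erase]
      by_cases hxv : x = v <;> simp_all [and_assoc]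
    refine (hmin _ (mem_Fmin_of_card_le hH hfeas hcard.le)).not_gt ?_
    rw [hcloser]
    exact card_erase_lt_of_mem (mem_sdiff.2 ⟨huH, huK⟩)

namespace IsRibbonLoop

variable (h : D.IsRibbonLoop e) (hF₀ : F₀ ∈ D.Fmin)
include h hF₀

theorem card_lt (hF : F ∈ D.F) (heF : e ∈ F) : F₀.card < F.card :=
  (card_le_of_mem_Fmin hF₀ hF).lt_of_ne fun hc => h F (mem_Fmin_of_card_le hF₀ hF hc.ge) heF

theorem card_le_of_mem_twist_singleton (hG : G ∈ (D.twist {e}).F) : F₀.card ≤ G.card := by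
  by_cases heG : e ∈ G
  · exact (card_lt_of_mem_twist_singleton hF₀ hG heG).le
  · have := h.card_lt hF₀ ((mem_twist_singleton_of_notMem heG).1 hG) (mem_insert_self e G)
    rw [card_insert_of_notMem heG] at this
    omega

theorem erase_mem_of_card_eq (hD : D.IsDeltaMatroid) (hK : K ∈ D.F) (heK : e ∈ K)
    (hcard : K.card = F₀.card + 1) : K.erase e ∈ D.F := by
  obtain ⟨H, hH, hHK⟩ := hD.exists_mem_Fmin_subset_s12 hK
  have hHK' : H ⊆ K.erase e := subset_erase.2 ⟨hHK, h H hH⟩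
  have hle : (K.erase e).card ≤ H.card := by
    rw [card_erase_of_mem heK, hcard, card_eq_of_mem_Fmin hF₀ hH]
    rfl
  rw [← eq_of_subset_of_card_le hHK' hle]
  exact mem_of_mem_Fmin hH

/-- Inside `D*{e}`, the set `F₁ - e` is minimum and `e` is a ribbon loop, so
`erase_mem_of_card_eq` applies there to `K ∪ e`. -/
theorem insert_mem_of_mem_Fmin (hD' : (D.twist {e}).IsDeltaMatroid) (hF₁ : F₁ ∈ D.F)
    (heF₁ : e ∈ F₁) (hF₁card : F₁.card = F₀.card + 1) (hK : K ∈ D.Fmin) :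
    insert e K ∈ D.F := by
  have heK : e ∉ K := h K hK
  have hF₁' : F₁.erase e ∈ (D.twist {e}).F := by
    rw [mem_twist_singleton_of_notMem (notMem_erase e F₁), insert_erase heF₁]
    exact hF₁
  have hF₁card' : (F₁.erase e).card = F₀.card := by
    rw [card_erase_of_mem heF₁, hF₁card, Nat.add_sub_cancel]
  have hF₁min : F₁.erase e ∈ (D.twist {e}).Fmin :=
    mem_filter.2 ⟨hF₁', fun G hG => hF₁card' ▸ h.card_le_of_mem_twist_singleton hF₀ hG⟩
  have hRL : (D.twist {e}).IsRibbonLoop e :=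
    isRibbonLoop_of_card_lt hF₁' fun G hG heG =>
      hF₁card' ▸ card_lt_of_mem_twist_singleton hF₀ hG heG
  have hKe : insert e K ∈ (D.twist {e}).F := by
    rw [mem_twist_singleton_of_mem (mem_insert_self e K), erase_insert heK]
    exact mem_of_mem_Fmin hK
  have := hRL.erase_mem_of_card_eq hF₁min hD' hKe (mem_insert_self e K)
    (by rw [card_insert_of_notMem heK, hF₁card', card_eq_of_mem_Fmin hF₀ hK])
  rwa [erase_insert heK, mem_twist_singleton_of_notMem heK] at this

theorem not_isRibbonLoop_twist_singleton (hA : ∀ F ∈ D.F, e ∈ F → F.card ≠ F₀.card + 1) :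
    ¬ (D.twist {e}).IsRibbonLoop e := by
  intro h'
  have heF₀ : e ∉ F₀ := h F₀ hF₀
  refine h' (insert e F₀) (mem_filter.2 ⟨?_, fun G hG => ?_⟩) (mem_insert_self _ _)
  · rw [mem_twist_singleton_of_mem (mem_insert_self e F₀), erase_insert heF₀]
    exact mem_of_mem_Fmin hF₀
  · rw [card_insert_of_notMem heF₀]
    by_cases heG : e ∈ G
    · exact card_lt_of_mem_twist_singleton hF₀ hG heG
    · have hG' := (mem_twist_singleton_of_notMem heG).1 hG
      have h1 := h.card_lt hF₀ hG' (mem_insert_self e G)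
      have h2 := hA _ hG' (mem_insert_self e G)
      rw [card_insert_of_notMem heG] at h1 h2
      omega

theorem not_isRibbonLoop_lc_twist_singleton (hD : D.IsDeltaMatroid)
    (hD' : (D.twist {e}).IsDeltaMatroid) (hF₁ : F₁ ∈ D.F) (heF₁ : e ∈ F₁)
    (hF₁card : F₁.card = F₀.card + 1) : ¬ ((D.lc e).twist {e}).IsRibbonLoop e := by
  intro h'
  refine h' F₁ (mem_filter.2 ⟨?_, fun G hG => ?_⟩) heF₁
  · exact (mem_lc_twist_singleton_of_mem heF₁).2
      (h.erase_mem_of_card_eq hF₀ hD hF₁ heF₁ hF₁card)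
  · rw [hF₁card, Nat.add_one_le_iff]
    by_cases heG : e ∈ G
    · exact card_lt_of_mem_lc_twist_singleton hF₀ hG heG
    by_contra hle
    rcases (mem_lc_twist_singleton_of_notMem heG).1 hG with ⟨hGe, hGn⟩ | ⟨hGD, hGe⟩
    · have h1 := h.card_lt hF₀ hGe (mem_insert_self e G)
      rw [card_insert_of_notMem heG] at h1
      have := h.erase_mem_of_card_eq hF₀ hD hGe (mem_insert_self e G)
        (by rw [card_insert_of_notMem heG]; omega)
      exact hGn (by rwa [erase_insert heG] at this)
    · exact hGe (h.insert_mem_of_mem_Fmin hF₀ hD' hF₁ heF₁ hF₁card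
        (mem_Fmin_of_card_le hF₀ hGD (by omega)))

end IsRibbonLoop

theorem IsRibbonLoop.not_isRibbonLoop_twist_and_lc_twist (hD : D.IsDeltaMatroid)
    (hD' : (D.twist {e}).IsDeltaMatroid) (h : D.IsRibbonLoop e) :
    ¬ ((D.twist {e}).IsRibbonLoop e ∧ ((D.lc e).twist {e}).IsRibbonLoop e) := by
  obtain ⟨F₀, hF₀⟩ := Fmin_nonempty_s12 hD.1
  rintro ⟨htwist, hlc⟩
  by_cases hB : ∃ F₁ ∈ D.F, e ∈ F₁ ∧ F₁.card = F₀.card + 1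
  · obtain ⟨F₁, hF₁, heF₁, hF₁card⟩ := hB
    exact h.not_isRibbonLoop_lc_twist_singleton hF₀ hD hD' hF₁ heF₁ hF₁card hlc
  · push Not at hB
    exact h.not_isRibbonLoop_twist_singleton hF₀ hB htwist

end

/-- (1) `e` is a coloop of `D` iff `e` is a loop of `D*{e}`; (2) `e` is neither a
coloop nor a ribbon loop of `D` iff `e` is a non-trivial orientable ribbon loop
of `D*{e}`. -/
theorem coloop_ribbonLoop_twist (D : SetSystem α) (hD : D.VfSafe) (e : α) (he : e ∈ D.E) :
    (D.IsColoop e ↔ (D.twist {e}).IsLoop e) ∧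
    ((¬ D.IsColoop e ∧ ¬ D.IsRibbonLoop e) ↔
      ((D.twist {e}).IsOrientableRL e ∧ ¬ (D.twist {e}).IsLoop e)) := by
  have hDM : D.IsDeltaMatroid := hD D (.refl D)
  have hDM' : (D.twist {e}).IsDeltaMatroid :=
    hD _ (.twist D D {e} (Finset.singleton_subset_iff.2 he) (.refl D))
  refine ⟨isColoop_iff_isLoop_twist_singleton, ?_⟩
  rw [IsOrientableRL, twist_singleton_dpivot_singleton, ← isColoop_iff_isLoop_twist_singleton]
  constructor
  · rintro ⟨hNC, hNRL⟩
    obtain ⟨F, hF, heF⟩ : ∃ F ∈ D.Fmin, e ∈ F := by simpa [IsRibbonLoop] using hNRL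
    exact ⟨⟨isRibbonLoop_twist_of_mem_Fmin hF heF, isRibbonLoop_lc_twist_of_mem_Fmin hF heF⟩,
      hNC⟩
  · rintro ⟨hRL, hNC⟩
    exact ⟨hNC, fun h => h.not_isRibbonLoop_twist_and_lc_twist hDM hDM' hRL⟩

end SetSystem
end
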